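/- arXiv:1307.3012 — 2 statements merged into one kernel-verified Lean document; each statement's English description precedes it below -/
import Mathlib

section
/- If a positive function f on momenta satisfies f(p1)/(1+f(p1)) = (f(p2)/(1+f(p2)))·(f(p3)/(1+f(p3))) whenever p1 = p2 + p3 and |p1|² = |p2|² + |p3|² + 2mgn_c, then f(p)/(1+f(p)) = exp(-(α(|p|²+2mgn_c) + β·p)) for some constants α > 0 and β ∈ ℝ³; equivalently f is a Planckian f(p) = 1/(exp(α(|p|²+2mgn_c)+β·p) - 1). -/
open MeasureTheory

noncomputable section

/-- Momentum space ℝ³. -/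
abbrev P3 := EuclideanSpace ℝ (Fin 3)

/-!
With `c = m g n_c` and `G = log (f / (1 + f))`, the equilibrium equation says that
`G (p + q) = G p + G q` whenever `⟪p, q⟫ = c`, because `‖p + q‖² = ‖p‖² + ‖q‖² + 2 ⟪p, q⟫`.

If `x, z ⊥ y` and `⟪x, z⟫ = c`, expanding `G (x + y + z)` in two ways gives
`G (x + y) - G x = G (z + y) - G z`. In dimension three a chain of three such steps joins `x` to
any `t • x` with `t ≠ 0`, and letting `t → 0` yields `G (x + y) = G x + G y - G 0` for all
orthogonal `x, y`. So `G - G 0` is continuous and orthogonally additive, hence of the form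
`a ‖x‖² + ⟪b, x⟫`: its even part is radial with a profile additive on `[0, ∞)`, and its odd
part is additive. The constraint then forces `G 0 = 2 a c`, and `G < 0` forces `a < 0`.
-/

open Module
open scoped RealInnerProductSpace

theorem eq_mul_of_continuous_of_map_add_nonneg {e : ℝ → ℝ} (he : Continuous e)
    (hadd : ∀ t s, 0 ≤ t → 0 ≤ s → e (t + s) = e t + e s) {t : ℝ} (ht : 0 ≤ t) :
    e t = t * e 1 := by
  have hdiff : ∀ a b a' b', 0 ≤ a → 0 ≤ b → 0 ≤ a' → 0 ≤ b' → a + b' = a' + b →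
      e a - e b = e a' - e b' := by
    intro a b a' b' ha hb ha' hb' h
    have h₁ := hadd a b' ha hb'
    have h₂ := hadd a' b ha' hb
    rw [h] at h₁
    linarith
  -- `t ↦ e (|t| + t) - e |t|` extends `e` from `[0, ∞)` to an additive function on `ℝ`.
  let F : ℝ →+ ℝ := AddMonoidHom.mk' (fun t => e (|t| + t) - e |t|) fun t s => by
    have := hdiff (|t + s| + (t + s)) |t + s| (|t| + t + (|s| + s)) (|t| + |s|)
      (by linarith [neg_abs_le (t + s)]) (abs_nonneg _)
      (by linarith [neg_abs_le t, neg_abs_le s]) (by positivity) (by ring)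
    rw [this, hadd _ _ (by linarith [neg_abs_le t]) (by linarith [neg_abs_le s]),
      hadd _ _ (abs_nonneg t) (abs_nonneg s)]
    ring
  have hF : Continuous F := by
    change Continuous fun t => e (|t| + t) - e |t|
    fun_prop
  have hFe : ∀ t, 0 ≤ t → F t = e t := fun t ht => by
    change e (|t| + t) - e |t| = e t
    rw [abs_of_nonneg ht, hadd t t ht ht]
    ring
  simpa [hFe t ht, hFe 1 zero_le_one] using map_real_smul F hF t 1

variable {E : Type*} [NormedAddCommGroup E] [InnerProductSpace ℝ E]

theorem exists_norm_eq_forall_inner_eq_zero [FiniteDimensional ℝ E] (s : Finset E)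
    (hs : s.card < finrank ℝ E) {r : ℝ} (hr : 0 ≤ r) :
    ∃ n : E, ‖n‖ = r ∧ ∀ a ∈ s, ⟪a, n⟫ = 0 := by
  set K := Submodule.span ℝ (s : Set E)
  have hK : Kᗮ ≠ ⊥ := by
    intro h
    have := K.finrank_add_finrank_orthogonal
    rw [h, finrank_bot] at this
    have : finrank ℝ K ≤ s.card := finrank_span_finset_le_card s
    omega
  obtain ⟨n, hn, hn0⟩ := Submodule.exists_mem_ne_zero_of_ne_bot hK
  refine ⟨(r / ‖n‖) • n, ?_, fun a ha => ?_⟩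
  · rw [norm_smul, Real.norm_eq_abs, abs_div, abs_norm, abs_of_nonneg hr,
      div_mul_cancel₀ _ (norm_ne_zero_iff.mpr hn0)]
  · rw [inner_smul_right, Submodule.inner_right_of_mem_orthogonal (Submodule.subset_span ha) hn,
      mul_zero]

def OrthogonallyAdditive (χ : E → ℝ) : Prop :=
  ∀ p q : E, ⟪p, q⟫ = 0 → χ (p + q) = χ p + χ q

namespace OrthogonallyAdditive

variable {χ ψ : E → ℝ}

theorem map_zero (hχ : OrthogonallyAdditive χ) : χ 0 = 0 := by
  have := hχ 0 0 (inner_zero_left 0)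
  rw [add_zero] at this
  linarith

theorem comp_neg (hχ : OrthogonallyAdditive χ) : OrthogonallyAdditive fun x => χ (-x) :=
  fun p q h => by
    dsimp only
    rw [neg_add]
    exact hχ (-p) (-q) (by rw [inner_neg_neg, h])

theorem add (hχ : OrthogonallyAdditive χ) (hψ : OrthogonallyAdditive ψ) :
    OrthogonallyAdditive fun x => χ x + ψ x :=
  fun p q h => by dsimp only; rw [hχ p q h, hψ p q h]; ring

theorem sub (hχ : OrthogonallyAdditive χ) (hψ : OrthogonallyAdditive ψ) :
    OrthogonallyAdditive fun x => χ x - ψ x :=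
  fun p q h => by dsimp only; rw [hχ p q h, hψ p q h]; ring

theorem map_add_map_neg_of_norm_eq (hχ : OrthogonallyAdditive χ) {x y : E} (h : ‖x‖ = ‖y‖) :
    χ x = χ ((1 / 2 : ℝ) • (x + y)) + χ ((1 / 2 : ℝ) • (x - y)) ∧
      χ y = χ ((1 / 2 : ℝ) • (x + y)) + χ (-((1 / 2 : ℝ) • (x - y))) := by
  have hpq : ⟪(1 / 2 : ℝ) • (x + y), (1 / 2 : ℝ) • (x - y)⟫ = 0 := by
    rw [inner_smul_left, inner_smul_right, (real_inner_add_sub_eq_zero_iff x y).mpr h]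
    simp
  constructor
  · rw [← hχ _ _ hpq]
    congr 1
    module
  · rw [← hχ _ _ (by rw [inner_neg_right, hpq, neg_zero])]
    congr 1
    module

theorem eq_of_norm_eq_of_even (hχ : OrthogonallyAdditive χ) (heven : ∀ x, χ (-x) = χ x)
    {x y : E} (h : ‖x‖ = ‖y‖) : χ x = χ y := by
  obtain ⟨hx, hy⟩ := hχ.map_add_map_neg_of_norm_eq h
  rw [hx, hy, heven]

theorem exists_eq_mul_norm_sq_of_even [FiniteDimensional ℝ E] (hE : 2 ≤ finrank ℝ E)
    (hχ : OrthogonallyAdditive χ) (hcont : Continuous χ) (heven : ∀ x, χ (-x) = χ x) :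
    ∃ a : ℝ, ∀ x, χ x = a * ‖x‖ ^ 2 := by
  obtain ⟨u, hu, -⟩ := exists_norm_eq_forall_inner_eq_zero (∅ : Finset E) (by simp; omega)
    zero_le_one
  obtain ⟨v, hv, huv⟩ := exists_norm_eq_forall_inner_eq_zero {u} (by simp; omega) zero_le_one
  have hnorm : ∀ {w : E} {t : ℝ}, ‖w‖ = 1 → 0 ≤ t → ‖√t • w‖ ^ 2 = t := fun hw ht => by
    rw [norm_smul, hw, mul_one, Real.norm_eq_abs, sq_abs, Real.sq_sqrt ht]
  set e : ℝ → ℝ := fun t => χ (√t • u)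
  have hχe : ∀ x, χ x = e (‖x‖ ^ 2) := fun x =>
    hχ.eq_of_norm_eq_of_even heven <| by
      rw [← sq_eq_sq₀ (norm_nonneg _) (norm_nonneg _), hnorm hu (sq_nonneg _)]
  have he : Continuous e := by fun_prop
  have hadd : ∀ t s, 0 ≤ t → 0 ≤ s → e (t + s) = e t + e s := by
    intro t s ht hs
    have horth : ⟪√t • u, √s • v⟫ = 0 := by
      rw [inner_smul_left, inner_smul_right, huv u (Finset.mem_singleton_self u), mul_zero,
        mul_zero]
    calc e (t + s) = χ (√t • u + √s • v) := by
          rw [hχe (√t • u + √s • v), norm_add_sq_real, horth, hnorm hu ht, hnorm hv hs]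
          ring_nf
      _ = e t + e s := by rw [hχ _ _ horth, hχe (√s • v), hnorm hv hs]
  refine ⟨e 1, fun x => ?_⟩
  rw [hχe x, eq_mul_of_continuous_of_map_add_nonneg he hadd (sq_nonneg _), mul_comm]

theorem map_two_smul_of_odd [FiniteDimensional ℝ E] (hE : 2 ≤ finrank ℝ E)
    (hχ : OrthogonallyAdditive χ) (hodd : ∀ x, χ (-x) = -χ x) (x : E) :
    χ ((2 : ℝ) • x) = 2 * χ x := by
  obtain ⟨q, hq, hxq⟩ := exists_norm_eq_forall_inner_eq_zero {x} (by simp; omega)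
    (norm_nonneg x)
  have hxq : ⟪x, q⟫ = 0 := hxq x (Finset.mem_singleton_self x)
  calc χ ((2 : ℝ) • x) = χ ((x + q) + (x - q)) := by congr 1; module
    _ = χ (x + q) + χ (x + -q) := by
        rw [hχ _ _ ((real_inner_add_sub_eq_zero_iff x q).mpr hq.symm), sub_eq_add_neg]
    _ = 2 * χ x := by
        rw [hχ _ _ hxq, hχ _ _ (by rw [inner_neg_right, hxq, neg_zero]), hodd]
        ring

theorem map_add_of_norm_eq_of_odd [FiniteDimensional ℝ E] (hE : 2 ≤ finrank ℝ E)
    (hχ : OrthogonallyAdditive χ) (hodd : ∀ x, χ (-x) = -χ x) {x y : E} (h : ‖x‖ = ‖y‖) :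
    χ (x + y) = χ x + χ y := by
  obtain ⟨hx, hy⟩ := hχ.map_add_map_neg_of_norm_eq h
  calc χ (x + y) = χ ((2 : ℝ) • ((1 / 2 : ℝ) • (x + y))) := by congr 1; module
    _ = χ x + χ y := by rw [hχ.map_two_smul_of_odd hE hodd, hx, hy, hodd]; ring

theorem map_add_smul_of_odd [FiniteDimensional ℝ E] (hE : 2 ≤ finrank ℝ E)
    (hχ : OrthogonallyAdditive χ) (hodd : ∀ x, χ (-x) = -χ x) (v : E) (s t : ℝ) :
    χ ((s + t) • v) = χ (s • v) + χ (t • v) := by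
  wlog hst : s ^ 2 ≤ t ^ 2 generalizing s t
  · have hts : t ^ 2 ≤ s ^ 2 := (not_le.mp hst).le
    rw [add_comm s, this t s hts, add_comm]
  obtain ⟨w, hw, hvw⟩ := exists_norm_eq_forall_inner_eq_zero {v} (by simp; omega)
    (mul_nonneg (Real.sqrt_nonneg (t ^ 2 - s ^ 2)) (norm_nonneg v))
  have hvw : ∀ r : ℝ, ⟪r • v, w⟫ = 0 := fun r => by
    rw [inner_smul_left, hvw v (Finset.mem_singleton_self v), mul_zero]
  -- `w ⊥ v` is chosen so that `s • v + w` and `t • v` have the same length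
  have hnorm : ‖s • v + w‖ = ‖t • v‖ := by
    rw [← sq_eq_sq₀ (norm_nonneg _) (norm_nonneg _), norm_add_sq_real, hvw, hw, norm_smul,
      norm_smul]
    simp only [mul_pow, Real.norm_eq_abs, sq_abs, Real.sq_sqrt (sub_nonneg.mpr hst)]
    ring
  have h := hχ.map_add_of_norm_eq_of_odd hE hodd hnorm
  rw [show s • v + w + t • v = (s + t) • v + w by module, hχ _ _ (hvw _), hχ _ _ (hvw _)] at h
  linarith

theorem map_add_of_odd [FiniteDimensional ℝ E] (hE : 2 ≤ finrank ℝ E)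
    (hχ : OrthogonallyAdditive χ) (hodd : ∀ x, χ (-x) = -χ x) (x y : E) :
    χ (x + y) = χ x + χ y := by
  rcases eq_or_ne x 0 with rfl | hx
  · rw [zero_add, hχ.map_zero, zero_add]
  set μ := ⟪x, y⟫ / ‖x‖ ^ 2
  have horth : ∀ r : ℝ, ⟪r • x, y - μ • x⟫ = 0 := fun r => by
    rw [inner_smul_left, inner_sub_right, inner_smul_right, real_inner_self_eq_norm_sq,
      div_mul_cancel₀ _ (by positivity), sub_self, mul_zero]
  calc χ (x + y) = χ ((1 + μ) • x + (y - μ • x)) := by congr 1; module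
    _ = χ ((1 : ℝ) • x) + χ (μ • x) + χ (y - μ • x) := by
        rw [hχ _ _ (horth _), hχ.map_add_smul_of_odd hE hodd]
    _ = χ x + χ (μ • x + (y - μ • x)) := by rw [hχ _ _ (horth _), one_smul, add_assoc]
    _ = χ x + χ y := by rw [add_sub_cancel]

theorem exists_eq_norm_sq_add_inner [FiniteDimensional ℝ E] (hE : 2 ≤ finrank ℝ E)
    (hχ : OrthogonallyAdditive χ) (hcont : Continuous χ) :
    ∃ (a : ℝ) (b : E), ∀ x, χ x = a * ‖x‖ ^ 2 + ⟪b, x⟫ := by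
  obtain ⟨a, ha⟩ := (hχ.add hχ.comp_neg).exists_eq_mul_norm_sq_of_even hE (by fun_prop)
    fun x => by rw [neg_neg, add_comm]
  let O : E →+ ℝ := AddMonoidHom.mk' (fun x => χ x - χ (-x))
    ((hχ.sub hχ.comp_neg).map_add_of_odd hE fun x => by rw [neg_neg, neg_sub])
  let L : StrongDual ℝ E :=
    O.toRealLinearMap (by change Continuous fun x => χ x - χ (-x); fun_prop)
  refine ⟨a / 2, (1 / 2 : ℝ) • (InnerProductSpace.toDual ℝ E).symm L, fun x => ?_⟩
  have hL : L x = χ x - χ (-x) := rfl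
  rw [inner_smul_left, InnerProductSpace.toDual_symm_apply, hL]
  have hax := ha x
  simp only [conj_trivial]
  linarith

end OrthogonallyAdditive

def IsAdditiveOnInnerEq (c : ℝ) (G : E → ℝ) : Prop :=
  ∀ p q : E, ⟪p, q⟫ = c → G (p + q) = G p + G q

namespace IsAdditiveOnInnerEq

variable {c : ℝ} {G : E → ℝ}

/-- Expand `G (x + y + z)` along `(x + y) + z` and along `x + (y + z)`. -/
theorem map_add_sub_eq (hG : IsAdditiveOnInnerEq c G) {x y z : E} (hxz : ⟪x, z⟫ = c)
    (hxy : ⟪x, y⟫ = 0) (hzy : ⟪z, y⟫ = 0) : G (x + y) - G x = G (z + y) - G z := by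
  have h₁ := hG (x + y) z (by rw [inner_add_left, hxz, real_inner_comm, hzy, add_zero])
  have h₂ := hG x (z + y) (by rw [inner_add_right, hxz, hxy, add_zero])
  rw [← add_assoc, add_right_comm x z y] at h₂
  linarith

theorem map_smul_add_sub_eq [FiniteDimensional ℝ E] (hE : 3 ≤ finrank ℝ E)
    (hG : IsAdditiveOnInnerEq c G) {x y : E} (hxy : ⟪x, y⟫ = 0) {t : ℝ} (ht : t ≠ 0) :
    G (t • x + y) - G (t • x) = G (x + y) - G x := by
  classical
  rcases eq_or_ne x 0 with rfl | hx
  · rw [smul_zero]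
  obtain ⟨u, hu, hxyu⟩ := exists_norm_eq_forall_inner_eq_zero {x, y}
    (Finset.card_le_two.trans_lt (by omega)) zero_le_one
  have hxu : ⟪x, u⟫ = 0 := hxyu x (by simp)
  have hyu : ⟪y, u⟫ = 0 := hxyu y (by simp)
  have hx2 : ‖x‖ ^ 2 ≠ 0 := by positivity
  -- the chain `x, z₁, z₂, t • x` of vectors orthogonal to `y`, consecutive ones with `⟪·, ·⟫ = c`
  set z₁ := (c / ‖x‖ ^ 2) • x + (1 : ℝ) • u
  set z₂ := (c / (t * ‖x‖ ^ 2)) • x + (c - c ^ 2 / (t * ‖x‖ ^ 2)) • u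
  have horth : ∀ a b : ℝ, ⟪a • x + b • u, y⟫ = 0 := fun a b => by
    rw [inner_add_left, inner_smul_left, inner_smul_left, hxy, real_inner_comm, hyu]
    simp
  have hinner : ∀ a b a' b' : ℝ,
      ⟪a • x + b • u, a' • x + b' • u⟫ = a * a' * ‖x‖ ^ 2 + b * b' := fun a b a' b' => by
    simp only [inner_add_left, inner_add_right, inner_smul_left, inner_smul_right,
      real_inner_self_eq_norm_sq, hxu, real_inner_comm x u, hu, conj_trivial]
    ring
  have h₁ : ⟪x, z₁⟫ = c := by
    rw [inner_add_right, inner_smul_right, inner_smul_right, real_inner_self_eq_norm_sq, hxu,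
      div_mul_cancel₀ _ hx2, mul_zero, add_zero]
  have h₂ : ⟪z₁, z₂⟫ = c := (hinner _ _ _ _).trans (by field_simp; ring)
  have h₃ : ⟪z₂, t • x⟫ = c := by
    have := hinner (c / (t * ‖x‖ ^ 2)) (c - c ^ 2 / (t * ‖x‖ ^ 2)) t 0
    rw [zero_smul, add_zero, mul_zero, add_zero] at this
    rw [this]
    field_simp
  have hz₁ : ⟪z₁, y⟫ = 0 := horth _ _
  have hz₂ : ⟪z₂, y⟫ = 0 := horth _ _
  have htx : ⟪t • x, y⟫ = 0 := by rw [inner_smul_left, hxy, mul_zero]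
  rw [hG.map_add_sub_eq h₁ hxy hz₁, hG.map_add_sub_eq h₂ hz₁ hz₂, hG.map_add_sub_eq h₃ hz₂ htx]

theorem map_add_of_inner_eq_zero [FiniteDimensional ℝ E] (hE : 3 ≤ finrank ℝ E)
    (hG : IsAdditiveOnInnerEq c G) (hcont : Continuous G) {x y : E} (hxy : ⟪x, y⟫ = 0) :
    G (x + y) = G x + G y - G 0 := by
  -- `t ↦ G (t • x + y) - G (t • x)` is continuous and constant on `t ≠ 0`, so also at `t = 0`
  have h := Continuous.ext_on (dense_compl_singleton (0 : ℝ)) (by fun_prop) continuous_const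
    (fun t (ht : t ≠ 0) => hG.map_smul_add_sub_eq hE hxy ht)
  have h0 := congr_fun h 0
  simp only [zero_smul, zero_add] at h0
  linarith

theorem orthogonallyAdditive_sub_map_zero [FiniteDimensional ℝ E] (hE : 3 ≤ finrank ℝ E)
    (hG : IsAdditiveOnInnerEq c G) (hcont : Continuous G) :
    OrthogonallyAdditive fun x => G x - G 0 := fun p q h => by
  dsimp only
  rw [hG.map_add_of_inner_eq_zero hE hcont h]
  ring

theorem exists_eq_norm_sq_add_inner [FiniteDimensional ℝ E] (hE : 3 ≤ finrank ℝ E)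
    (hG : IsAdditiveOnInnerEq c G) (hcont : Continuous G) :
    ∃ (a : ℝ) (b : E), ∀ x, G x = a * (‖x‖ ^ 2 + 2 * c) + ⟪b, x⟫ := by
  obtain ⟨a, b, hab⟩ :=
    (hG.orthogonallyAdditive_sub_map_zero hE hcont).exists_eq_norm_sq_add_inner (by omega)
      (by fun_prop)
  have hG' : ∀ x, G x = a * ‖x‖ ^ 2 + ⟪b, x⟫ + G 0 := fun x => by linarith [hab x]
  obtain ⟨u, hu, -⟩ := exists_norm_eq_forall_inner_eq_zero (∅ : Finset E) (by simp; omega)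
    zero_le_one
  have hcu : ⟪c • u, u⟫ = c := by rw [inner_smul_left, real_inner_self_eq_norm_sq, hu]; simp
  have h := hG _ _ hcu
  rw [hG' (c • u + u), hG' (c • u), hG' u, norm_add_sq_real, hcu, inner_add_right] at h
  refine ⟨a, b, fun x => ?_⟩
  rw [hG' x]
  linarith

end IsAdditiveOnInnerEq

theorem eq_one_div_exp_sub_one {y X : ℝ} (hy : 0 < y) (h : y / (1 + y) = Real.exp (-X)) :
    y = 1 / (Real.exp X - 1) := by
  have hX : Real.exp X = (1 + y) / y := by
    rw [← inv_div, h, Real.exp_neg, inv_inv]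
  rw [hX]
  field_simp
  ring

/-- a positive function satisfying the equilibrium functional equation
is a Planckian. -/
theorem equilibrium_is_planckian
    (m g nc : ℝ) (hm : 0 < m) (hg : 0 < g) (hnc : 0 < nc)
    (f : P3 → ℝ) (hpos : ∀ p, 0 < f p) (hcont : Continuous f)
    (heq : ∀ p1 p2 p3 : P3, p1 = p2 + p3 →
      ‖p1‖ ^ 2 = ‖p2‖ ^ 2 + ‖p3‖ ^ 2 + 2 * m * g * nc →
      f p1 / (1 + f p1) = (f p2 / (1 + f p2)) * (f p3 / (1 + f p3))) :
    ∃ α : ℝ, 0 < α ∧ ∃ β : P3, ∀ p : P3,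
      f p / (1 + f p) = Real.exp (-(α * (‖p‖ ^ 2 + 2 * m * g * nc) + (inner ℝ β p : ℝ))) ∧
      f p = 1 / (Real.exp (α * (‖p‖ ^ 2 + 2 * m * g * nc) + (inner ℝ β p : ℝ)) - 1) := by
  set F : P3 → ℝ := fun p => f p / (1 + f p)
  have hF : ∀ p, 0 < F p := fun p => div_pos (hpos p) (by linarith [hpos p])
  have hF1 : ∀ p, F p < 1 := fun p => (div_lt_one (by linarith [hpos p])).mpr (by linarith)
  have hG : IsAdditiveOnInnerEq (m * g * nc) (fun p => Real.log (F p)) := fun p q h => by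
    have hnorm : ‖p + q‖ ^ 2 = ‖p‖ ^ 2 + ‖q‖ ^ 2 + 2 * m * g * nc := by
      rw [norm_add_sq_real, h]
      ring
    simp only [F, heq (p + q) p q rfl hnorm]
    exact Real.log_mul (hF p).ne' (hF q).ne'
  have hGcont : Continuous fun p => Real.log (F p) :=
    (hcont.div (by fun_prop) fun p => by linarith [hpos p]).log fun p => (hF p).ne'
  obtain ⟨a, b, hab⟩ := hG.exists_eq_norm_sq_add_inner (by simp) hGcont
  have ha : a < 0 := by
    have h0 := hab 0
    have := Real.log_neg (hF 0) (hF1 0)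
    simp only [norm_zero, inner_zero_right] at h0
    nlinarith [mul_pos (mul_pos hm hg) hnc]
  refine ⟨-a, neg_pos.mpr ha, -b, fun p => ?_⟩
  have hp : F p = Real.exp (-(-a * (‖p‖ ^ 2 + 2 * m * g * nc) + inner ℝ (-b) p)) := by
    rw [← Real.exp_log (hF p), hab p, inner_neg_left]
    ring_nf
  exact ⟨hp, eq_one_div_exp_sub_one (hpos p) hp⟩
end
end

section
/- The collision frequency ν satisfies the two-sided cubic growth bound ν₀(1+|p|)³ ≤ ν(p) ≤ ν₁(1+|p|)³ for all p with |p|² > 2Λ², for some positive constants ν₀, ν₁. -/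
open MeasureTheory

noncomputable section

/-- The Planckian P(p) = 1/(e^{|p|²} − 1). -/
def Pl (p : P3) : ℝ := 1 / (Real.exp (‖p‖ ^ 2) - 1)

/-- Admissible set of p₂ in the first integral of ν(p) (p playing the role of p₁):
the Dirac constraints determine |p₃|² = |p|² − gn₀ − |p₂|², the radial delta contributes
the factor π on the nonnegativity set, and χ̃ restricts all momenta to |q|² > 2Λ². -/
def domA (g n0 Λ : ℝ) (p : P3) : Set P3 :=
  {q | 2 * Λ ^ 2 < ‖q‖ ^ 2 ∧ 2 * Λ ^ 2 < ‖p‖ ^ 2 - g * n0 - ‖q‖ ^ 2 ∧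
    0 ≤ ‖p‖ ^ 2 - g * n0 - ‖q‖ ^ 2 - (p 0 - q 0) ^ 2}

/-- Admissible set of p₃ in the second integral of ν(p) (p playing the role of p₂):
here |p₁|² = |p|² + |p₃|² + gn₀. -/
def domB (g n0 Λ : ℝ) (p : P3) : Set P3 :=
  {q | 2 * Λ ^ 2 < ‖q‖ ^ 2 ∧ 0 ≤ ‖p‖ ^ 2 + ‖q‖ ^ 2 + g * n0 - (p 0 + q 0) ^ 2}

/-- The collision frequency ν(p) = ∫χ̃δ₀(1+P₂+P₃)dp₂dp₃ + 2∫χ̃δ₀(P₃−P₁)dp₁dp₃,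
with the Dirac measures δ₀ resolved explicitly. -/
def nuFreq (g n0 Λ : ℝ) (p : P3) : ℝ :=
  Real.pi * (∫ q in domA g n0 Λ p,
      (1 + Pl q + 1 / (Real.exp (‖p‖ ^ 2 - g * n0 - ‖q‖ ^ 2) - 1)))
  + 2 * Real.pi * (∫ q in domB g n0 Λ p,
      (Pl q - 1 / (Real.exp (‖p‖ ^ 2 + ‖q‖ ^ 2 + g * n0) - 1)))

/-!
Both integrands are governed by the Bose factor `bose x = 1 / (eˣ - 1)`, which is decreasing on
`(0, ∞)` and, for `x ≥ t > 0`, at most `(1 - e⁻ᵗ)⁻¹ e⁻ˣ`. On the region `|q|² > 2Λ²` cut out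
by `χ̃` the first integrand therefore lies between `1` and a constant, and the second between `0`
and a Gaussian in `q`.

Upper bound: the first domain lies in the ball of radius `|p|`, so its integral is `O(|p|³)`; the
second integral is bounded uniformly in `p`.

Lower bound: for large `|p|` the first domain contains a ball of radius `|p| / 16`, giving
`≳ |p|³`. For bounded `|p|` the second domain contains a fixed small ball inside the shell
`2Λ² < |q|² < 3Λ²` with `|q₀|` small (the slack `gn₀ > 0` absorbs the cross term `2 p₀ q₀`), on
which the second integrand is at least `bose (3Λ²) - bose (4Λ²) > 0`.
-/

open Metric Set

def bose (x : ℝ) : ℝ := 1 / (Real.exp x - 1)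

lemma bose_pos {x : ℝ} (hx : 0 < x) : 0 < bose x :=
  one_div_pos.2 (sub_pos.2 (Real.one_lt_exp_iff.2 hx))

lemma strictAntiOn_bose : StrictAntiOn bose (Ioi 0) := fun _ hx _ _ hxy =>
  one_div_lt_one_div_of_lt (sub_pos.2 (Real.one_lt_exp_iff.2 hx))
    (sub_lt_sub_right (Real.exp_lt_exp.2 hxy) 1)

lemma bose_le_mul_exp_neg {t x : ℝ} (ht : 0 < t) (htx : t ≤ x) :
    bose x ≤ (1 - Real.exp (-t))⁻¹ * Real.exp (-x) := by
  have hx : Real.exp (-x) < 1 := Real.exp_lt_one_iff.2 (by linarith)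
  have hbose : bose x = (1 - Real.exp (-x))⁻¹ * Real.exp (-x) := by
    rw [bose, Real.exp_neg]
    have : 1 < Real.exp x := Real.one_lt_exp_iff.2 (by linarith)
    field_simp
  rw [hbose]
  gcongr
  exact sub_pos.2 (Real.exp_lt_one_iff.2 (by linarith))

@[fun_prop]
lemma measurable_bose : Measurable bose := by
  unfold bose; fun_prop

lemma sq_apply_le_norm_sq {ι : Type*} [Fintype ι] (x : EuclideanSpace ℝ ι) (i : ι) :
    x i ^ 2 ≤ ‖x‖ ^ 2 := by
  simpa [Real.norm_eq_abs, sq_abs] using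
    pow_le_pow_left₀ (norm_nonneg _) (PiLp.norm_apply_le x i) 2

lemma norm_sq_eq_three (x : P3) : ‖x‖ ^ 2 = x 0 ^ 2 + x 1 ^ 2 + x 2 ^ 2 := by
  simp [EuclideanSpace.norm_sq_eq, Fin.sum_univ_three]

lemma abs_sub_apply_lt_of_mem_ball {ι : Type*} [Fintype ι] {x c : EuclideanSpace ℝ ι} {r : ℝ}
    (hx : x ∈ ball c r) (i : ι) : |x i - c i| < r :=
  (PiLp.norm_apply_le (x - c) i).trans_lt (mem_ball_iff_norm.1 hx)

lemma volume_real_ball_eq_pow_mul {n : ℕ} [NeZero n] (x : EuclideanSpace ℝ (Fin n)) {r : ℝ}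
    (hr : 0 ≤ r) :
    volume.real (ball x r) = r ^ n * volume.real (ball (0 : EuclideanSpace ℝ (Fin n)) 1) := by
  rw [measureReal_def, Measure.addHaar_ball volume x hr, finrank_euclideanSpace_fin,
    ENNReal.toReal_mul, ENNReal.toReal_ofReal (pow_nonneg hr n), measureReal_def]

lemma volume_real_ball_zero_one_pos {ι : Type*} [Fintype ι] :
    0 < volume.real (ball (0 : EuclideanSpace ℝ ι) 1) :=
  ENNReal.toReal_pos (measure_ball_pos volume 0 one_pos).ne' measure_ball_lt_top.ne

lemma integrable_exp_neg_norm_sq {V : Type*} [NormedAddCommGroup V] [InnerProductSpace ℝ V]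
    [FiniteDimensional ℝ V] [MeasurableSpace V] [BorelSpace V] :
    Integrable fun v : V => Real.exp (-‖v‖ ^ 2) := by
  refine Integrable.of_integral_ne_zero ?_
  simpa using (GaussianFourier.integral_rexp_neg_mul_sq_norm (V := V) one_pos).trans_ne
    (by positivity)

lemma mul_measureReal_le_setIntegral {α : Type*} [MeasurableSpace α] {μ : Measure α}
    {f : α → ℝ} {s t : Set α} {m : ℝ} (ht : MeasurableSet t) (hμt : μ t ≠ ⊤) (hts : t ⊆ s)
    (hf : IntegrableOn f s μ) (hf0 : 0 ≤ᵐ[μ.restrict s] f) (hm : ∀ x ∈ t, m ≤ f x) :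
    m * μ.real t ≤ ∫ x in s, f x ∂μ :=
  (setIntegral_ge_of_const_le_real ht hμt hm (hf.mono_set hts)).trans
    (setIntegral_mono_set hf hf0 hts.eventuallyLE)

def integrandA (g n0 : ℝ) (p q : P3) : ℝ :=
  1 + bose (‖q‖ ^ 2) + bose (‖p‖ ^ 2 - g * n0 - ‖q‖ ^ 2)

def integrandB (g n0 : ℝ) (p q : P3) : ℝ :=
  bose (‖q‖ ^ 2) - bose (‖p‖ ^ 2 + ‖q‖ ^ 2 + g * n0)

section Domains

variable {g n0 Λ : ℝ} {p q : P3}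

lemma nuFreq_eq : nuFreq g n0 Λ p = Real.pi * (∫ q in domA g n0 Λ p, integrandA g n0 p q)
    + 2 * Real.pi * ∫ q in domB g n0 Λ p, integrandB g n0 p q :=
  rfl

lemma measurableSet_domA : MeasurableSet (domA g n0 Λ p) :=
  measurableSet_setOfPred.2 (by fun_prop)

lemma measurableSet_domB : MeasurableSet (domB g n0 Λ p) :=
  measurableSet_setOfPred.2 (by fun_prop)

lemma domA_subset_ball (hgn : 0 ≤ g * n0) : domA g n0 Λ p ⊆ ball 0 ‖p‖ := by
  rintro q ⟨-, hq, -⟩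
  rw [mem_ball_zero_iff]
  exact lt_of_pow_lt_pow_left₀ 2 (norm_nonneg p) (by nlinarith)

lemma volume_domA_lt_top (hgn : 0 ≤ g * n0) : volume (domA g n0 Λ p) < ⊤ :=
  (measure_mono (domA_subset_ball hgn)).trans_lt measure_ball_lt_top

/-- The last constraint of `domA` reads `2 (q₀ - p₀/2)² + q₁² + q₂² ≤ |p|² - gn₀ - p₀²/2`, whence
the first coordinate of the centre; its third coordinate keeps `|q|` away from `0`. -/
lemma ball_subset_domA (hp : 0 < ‖p‖) (hΛ : 256 * Λ ^ 2 ≤ ‖p‖ ^ 2)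
    (hgn : 256 * (g * n0) ≤ ‖p‖ ^ 2) :
    ball !₂[p 0 / 2, 0, ‖p‖ / 4] (‖p‖ / 16) ⊆ domA g n0 Λ p := by
  intro q hq
  set R := ‖p‖
  obtain ⟨h0l, h0u⟩ := abs_lt.1 (by simpa using abs_sub_apply_lt_of_mem_ball hq 0)
  obtain ⟨h1l, h1u⟩ := abs_lt.1 (by simpa using abs_sub_apply_lt_of_mem_ball hq 1)
  obtain ⟨h2l, h2u⟩ := abs_lt.1 (by simpa using abs_sub_apply_lt_of_mem_ball hq 2)
  obtain ⟨hpl, hpu⟩ := abs_le.1 (by simpa using PiLp.norm_apply_le p 0)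
  have hq0 : q 0 ^ 2 < (9 * R / 16) ^ 2 := sq_lt_sq' (by linarith) (by linarith)
  have hq1 : q 1 ^ 2 < (R / 16) ^ 2 := sq_lt_sq' (by linarith) (by linarith)
  have hq2 : (3 * R / 16) ^ 2 < q 2 ^ 2 := sq_lt_sq' (by linarith) (by linarith)
  have hq2' : q 2 ^ 2 < (5 * R / 16) ^ 2 := sq_lt_sq' (by linarith) (by linarith)
  have hpq : (p 0 - q 0) ^ 2 < (9 * R / 16) ^ 2 := sq_lt_sq' (by linarith) (by linarith)
  have hnorm := norm_sq_eq_three q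
  refine ⟨?_, ?_, ?_⟩ <;> nlinarith [sq_nonneg (q 0), sq_nonneg (q 1)]

end Domains

section Shell

variable {g n0 Λ ρ M : ℝ} {p : P3}

lemma ball_subset_shell (hρ : 20 * ρ ≤ Λ) :
    ball !₂[0, 3 * Λ / 2, 0] ρ ⊆ {q : P3 | 2 * Λ ^ 2 < ‖q‖ ^ 2 ∧ ‖q‖ ^ 2 < 3 * Λ ^ 2} := by
  intro q hq
  obtain ⟨h0l, h0u⟩ := abs_lt.1 (by simpa using abs_sub_apply_lt_of_mem_ball hq 0)
  obtain ⟨h1l, h1u⟩ := abs_lt.1 (by simpa using abs_sub_apply_lt_of_mem_ball hq 1)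
  obtain ⟨h2l, h2u⟩ := abs_lt.1 (by simpa using abs_sub_apply_lt_of_mem_ball hq 2)
  have hq0 : q 0 ^ 2 < (Λ / 20) ^ 2 := sq_lt_sq' (by linarith) (by linarith)
  have hq1 : (29 * Λ / 20) ^ 2 < q 1 ^ 2 := sq_lt_sq' (by linarith) (by linarith)
  have hq1' : q 1 ^ 2 < (31 * Λ / 20) ^ 2 := sq_lt_sq' (by linarith) (by linarith)
  have hq2 : q 2 ^ 2 < (Λ / 20) ^ 2 := sq_lt_sq' (by linarith) (by linarith)
  have hnorm := norm_sq_eq_three q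
  constructor <;> nlinarith [sq_nonneg (q 0), sq_nonneg (q 2)]

lemma ball_subset_domB (hρ : 20 * ρ ≤ Λ) (hρM : 2 * M * ρ ≤ g * n0)
    (hp : ‖p‖ ≤ M) : ball !₂[0, 3 * Λ / 2, 0] ρ ⊆ domB g n0 Λ p := by
  intro q hq
  refine ⟨(ball_subset_shell hρ hq).1, ?_⟩
  obtain ⟨hql, hqu⟩ := abs_lt.1 (by simpa using abs_sub_apply_lt_of_mem_ball hq 0)
  obtain ⟨hpl, hpu⟩ := abs_le.1 (by simpa using PiLp.norm_apply_le p 0)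
  have hpq : p 0 * q 0 ≤ M * ρ := by nlinarith
  nlinarith [sq_apply_le_norm_sq p 0, sq_apply_le_norm_sq q 0]

end Shell

section Integrands

variable {g n0 Λ : ℝ} {p q : P3}

lemma one_le_integrandA (hq : q ∈ domA g n0 Λ p) : 1 ≤ integrandA g n0 p q := by
  obtain ⟨hq₁, hq₂, -⟩ := hq
  have h₁ := bose_pos (x := ‖q‖ ^ 2) (by nlinarith)
  have h₂ := bose_pos (x := ‖p‖ ^ 2 - g * n0 - ‖q‖ ^ 2) (by nlinarith)
  unfold integrandA
  linarith

lemma integrandA_le (hΛ : 0 < Λ) (hq : q ∈ domA g n0 Λ p) :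
    integrandA g n0 p q ≤ 1 + 2 * bose (2 * Λ ^ 2) := by
  obtain ⟨hq₁, hq₂, -⟩ := hq
  have hΛ2 : (2 * Λ ^ 2 : ℝ) ∈ Ioi 0 := by simp only [mem_Ioi]; positivity
  have h₁ := strictAntiOn_bose.antitoneOn hΛ2 (hΛ2.trans hq₁) hq₁.le
  have h₂ := strictAntiOn_bose.antitoneOn hΛ2 (hΛ2.trans hq₂) hq₂.le
  unfold integrandA
  linarith

lemma norm_integrandA_le (hΛ : 0 < Λ) (hq : q ∈ domA g n0 Λ p) :
    ‖integrandA g n0 p q‖ ≤ 1 + 2 * bose (2 * Λ ^ 2) := by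
  rw [Real.norm_of_nonneg (by linarith [one_le_integrandA hq])]
  exact integrandA_le hΛ hq

lemma integrableOn_integrandA (hΛ : 0 < Λ) (hgn : 0 ≤ g * n0) :
    IntegrableOn (integrandA g n0 p) (domA g n0 Λ p) :=
  Measure.integrableOn_of_bounded (volume_domA_lt_top hgn).ne (by unfold integrandA; fun_prop)
    ((ae_restrict_iff' measurableSet_domA).2 (ae_of_all _ fun _ => norm_integrandA_le hΛ))

lemma integrandB_nonneg (hgn : 0 ≤ g * n0) (hq : q ∈ domB g n0 Λ p) :
    0 ≤ integrandB g n0 p q := by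
  have hq₀ : ‖q‖ ^ 2 ∈ Ioi (0 : ℝ) := by simp only [mem_Ioi]; nlinarith [hq.1]
  have := strictAntiOn_bose.antitoneOn hq₀ (mem_Ioi.2 (by nlinarith [hq₀.out]))
    (by nlinarith : ‖q‖ ^ 2 ≤ ‖p‖ ^ 2 + ‖q‖ ^ 2 + g * n0)
  unfold integrandB
  linarith

lemma integrandB_le_mul_exp_neg (hΛ : 0 < Λ) (hgn : 0 ≤ g * n0) (hq : q ∈ domB g n0 Λ p) :
    integrandB g n0 p q ≤ (1 - Real.exp (-(2 * Λ ^ 2)))⁻¹ * Real.exp (-‖q‖ ^ 2) := by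
  have h₁ := bose_pos (x := ‖p‖ ^ 2 + ‖q‖ ^ 2 + g * n0) (by nlinarith [hq.1])
  have h₂ := bose_le_mul_exp_neg (by positivity) hq.1.le
  unfold integrandB
  linarith

lemma integrableOn_integrandB (hΛ : 0 < Λ) (hgn : 0 ≤ g * n0) :
    IntegrableOn (integrandB g n0 p) (domB g n0 Λ p) := by
  refine Integrable.mono'
    (integrable_exp_neg_norm_sq.const_mul (1 - Real.exp (-(2 * Λ ^ 2)))⁻¹).integrableOn
    (by unfold integrandB; fun_prop) ((ae_restrict_iff' measurableSet_domB).2 (ae_of_all _ ?_))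
  intro q hq
  rw [Real.norm_of_nonneg (integrandB_nonneg hgn hq)]
  exact integrandB_le_mul_exp_neg hΛ hgn hq

lemma bose_sub_bose_le_integrandB (hΛ : 0 < Λ) (hgn : 0 ≤ g * n0) (hp : 2 * Λ ^ 2 < ‖p‖ ^ 2)
    (hq : 2 * Λ ^ 2 < ‖q‖ ^ 2 ∧ ‖q‖ ^ 2 < 3 * Λ ^ 2) :
    bose (3 * Λ ^ 2) - bose (4 * Λ ^ 2) ≤ integrandB g n0 p q := by
  have hΛ2 : (2 * Λ ^ 2 : ℝ) ∈ Ioi 0 := by simp only [mem_Ioi]; positivity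
  have h₁ := strictAntiOn_bose.antitoneOn (hΛ2.trans hq.1) (mem_Ioi.2 (by positivity)) hq.2.le
  have h₂ := strictAntiOn_bose.antitoneOn (mem_Ioi.2 (by positivity))
    (mem_Ioi.2 (by nlinarith [hq.1])) (by nlinarith [hq.1] :
      4 * Λ ^ 2 ≤ ‖p‖ ^ 2 + ‖q‖ ^ 2 + g * n0)
  unfold integrandB
  linarith

end Integrands

section Integrals

variable {g n0 Λ : ℝ} {p : P3}

lemma setIntegral_integrandA_le (hΛ : 0 < Λ) (hgn : 0 ≤ g * n0) :
    ∫ q in domA g n0 Λ p, integrandA g n0 p q ≤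
      (1 + 2 * bose (2 * Λ ^ 2)) * volume.real (ball (0 : P3) 1) * ‖p‖ ^ 3 := by
  have hbose := bose_pos (x := 2 * Λ ^ 2) (by positivity)
  calc ∫ q in domA g n0 Λ p, integrandA g n0 p q
      ≤ ‖∫ q in domA g n0 Λ p, integrandA g n0 p q‖ := Real.le_norm_self _
    _ ≤ (1 + 2 * bose (2 * Λ ^ 2)) * volume.real (domA g n0 Λ p) :=
        norm_setIntegral_le_of_norm_le_const (volume_domA_lt_top hgn)
          fun _ => norm_integrandA_le hΛ
    _ ≤ (1 + 2 * bose (2 * Λ ^ 2)) * volume.real (ball (0 : P3) ‖p‖) := by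
        gcongr
        · finiteness
        · exact domA_subset_ball hgn
    _ = (1 + 2 * bose (2 * Λ ^ 2)) * volume.real (ball (0 : P3) 1) * ‖p‖ ^ 3 := by
        rw [volume_real_ball_eq_pow_mul _ (norm_nonneg p)]; ring

lemma setIntegral_integrandB_le (hΛ : 0 < Λ) (hgn : 0 ≤ g * n0) :
    ∫ q in domB g n0 Λ p, integrandB g n0 p q ≤
      (1 - Real.exp (-(2 * Λ ^ 2)))⁻¹ * ∫ q : P3, Real.exp (-‖q‖ ^ 2) := by
  have hC : 0 ≤ (1 - Real.exp (-(2 * Λ ^ 2)))⁻¹ :=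
    inv_nonneg.2 (sub_nonneg.2 (Real.exp_le_one_iff.2 (by nlinarith)))
  have hint := (integrable_exp_neg_norm_sq (V := P3)).const_mul (1 - Real.exp (-(2 * Λ ^ 2)))⁻¹
  calc ∫ q in domB g n0 Λ p, integrandB g n0 p q
      ≤ ∫ q in domB g n0 Λ p, (1 - Real.exp (-(2 * Λ ^ 2)))⁻¹ * Real.exp (-‖q‖ ^ 2) :=
        setIntegral_mono_on (integrableOn_integrandB hΛ hgn) hint.integrableOn
          measurableSet_domB fun _ => integrandB_le_mul_exp_neg hΛ hgn
    _ ≤ ∫ q, (1 - Real.exp (-(2 * Λ ^ 2)))⁻¹ * Real.exp (-‖q‖ ^ 2) :=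
        setIntegral_le_integral hint (ae_of_all _ fun _ => by positivity)
    _ = (1 - Real.exp (-(2 * Λ ^ 2)))⁻¹ * ∫ q : P3, Real.exp (-‖q‖ ^ 2) :=
        integral_const_mul _ _

lemma setIntegral_integrandA_nonneg : 0 ≤ ∫ q in domA g n0 Λ p, integrandA g n0 p q :=
  setIntegral_nonneg measurableSet_domA fun _ hq => zero_le_one.trans (one_le_integrandA hq)

lemma setIntegral_integrandB_nonneg (hgn : 0 ≤ g * n0) :
    0 ≤ ∫ q in domB g n0 Λ p, integrandB g n0 p q :=
  setIntegral_nonneg measurableSet_domB fun _ => integrandB_nonneg hgn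

lemma le_setIntegral_integrandA_of_large (hΛ : 0 < Λ) (hgn : 0 ≤ g * n0)
    (hp : 0 < ‖p‖) (hΛp : 256 * Λ ^ 2 ≤ ‖p‖ ^ 2) (hgnp : 256 * (g * n0) ≤ ‖p‖ ^ 2) :
    volume.real (ball (0 : P3) 1) * (‖p‖ / 16) ^ 3 ≤
      ∫ q in domA g n0 Λ p, integrandA g n0 p q := by
  have h := mul_measureReal_le_setIntegral measurableSet_ball measure_ball_lt_top.ne
    (ball_subset_domA hp hΛp hgnp) (integrableOn_integrandA hΛ hgn)
    ((ae_restrict_iff' measurableSet_domA).2 (ae_of_all _ fun _ hq =>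
      zero_le_one.trans (one_le_integrandA hq)))
    fun _ hq => one_le_integrandA (ball_subset_domA hp hΛp hgnp hq)
  rwa [one_mul, volume_real_ball_eq_pow_mul _ (by positivity), mul_comm] at h

lemma le_setIntegral_integrandB_of_norm_le {ρ M : ℝ} (hΛ : 0 < Λ) (hgn : 0 ≤ g * n0)
    (hp : 2 * Λ ^ 2 < ‖p‖ ^ 2) (hpM : ‖p‖ ≤ M) (hρ : 0 ≤ ρ) (hρΛ : 20 * ρ ≤ Λ)
    (hρM : 2 * M * ρ ≤ g * n0) :
    (bose (3 * Λ ^ 2) - bose (4 * Λ ^ 2)) * (ρ ^ 3 * volume.real (ball (0 : P3) 1)) ≤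
      ∫ q in domB g n0 Λ p, integrandB g n0 p q := by
  have h := mul_measureReal_le_setIntegral measurableSet_ball measure_ball_lt_top.ne
    (ball_subset_domB hρΛ hρM hpM) (integrableOn_integrandB hΛ hgn)
    ((ae_restrict_iff' measurableSet_domB).2 (ae_of_all _ fun _ => integrandB_nonneg hgn))
    fun _ hq => bose_sub_bose_le_integrandB hΛ hgn hp (ball_subset_shell hρΛ hq)
  rwa [volume_real_ball_eq_pow_mul _ hρ] at h

end Integrals

section Bounds

variable {g n0 Λ : ℝ}

lemma exists_nuFreq_le_mul_one_add_norm_pow_three (hΛ : 0 < Λ) (hgn : 0 ≤ g * n0) :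
    ∃ ν1 : ℝ, 0 < ν1 ∧ ∀ p : P3, nuFreq g n0 Λ p ≤ ν1 * (1 + ‖p‖) ^ 3 := by
  set CA := (1 + 2 * bose (2 * Λ ^ 2)) * volume.real (ball (0 : P3) 1)
  set CB := (1 - Real.exp (-(2 * Λ ^ 2)))⁻¹ * ∫ q : P3, Real.exp (-‖q‖ ^ 2)
  have hCA : 0 < CA := mul_pos (by linarith [bose_pos (x := 2 * Λ ^ 2) (by positivity)])
    volume_real_ball_zero_one_pos
  have hCB : 0 ≤ CB := (setIntegral_integrandB_nonneg hgn (p := 0)).trans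
    (setIntegral_integrandB_le hΛ hgn)
  refine ⟨Real.pi * CA + 2 * Real.pi * CB, by positivity, fun p => ?_⟩
  have hp3 : ‖p‖ ^ 3 ≤ (1 + ‖p‖) ^ 3 := by gcongr; linarith
  have hp1 : 1 ≤ (1 + ‖p‖) ^ 3 := one_le_pow₀ (by linarith [norm_nonneg p])
  rw [nuFreq_eq]
  calc Real.pi * (∫ q in domA g n0 Λ p, integrandA g n0 p q)
        + 2 * Real.pi * ∫ q in domB g n0 Λ p, integrandB g n0 p q
      ≤ Real.pi * (CA * ‖p‖ ^ 3) + 2 * Real.pi * CB := by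
        gcongr
        exacts [setIntegral_integrandA_le hΛ hgn, setIntegral_integrandB_le hΛ hgn]
    _ ≤ Real.pi * (CA * (1 + ‖p‖) ^ 3) + 2 * Real.pi * (CB * (1 + ‖p‖) ^ 3) := by
        gcongr
        exact le_mul_of_one_le_right hCB hp1
    _ = (Real.pi * CA + 2 * Real.pi * CB) * (1 + ‖p‖) ^ 3 := by ring

lemma exists_pos_le_nuFreq_of_norm_le (hΛ : 0 < Λ) (hgn : 0 < g * n0) {M : ℝ} (hM : 0 < M) :
    ∃ c : ℝ, 0 < c ∧ ∀ p : P3, 2 * Λ ^ 2 < ‖p‖ ^ 2 → ‖p‖ ≤ M → c ≤ nuFreq g n0 Λ p := by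
  set ρ := min (g * n0 / (2 * M)) (Λ / 20)
  have hρ : 0 < ρ := lt_min (by positivity) (by positivity)
  have hρΛ : 20 * ρ ≤ Λ := by linarith [min_le_right (g * n0 / (2 * M)) (Λ / 20)]
  have hρM : 2 * M * ρ ≤ g * n0 := by
    have := min_le_left (g * n0 / (2 * M)) (Λ / 20)
    rw [le_div_iff₀ (by positivity)] at this
    linarith
  have hδ : 0 < bose (3 * Λ ^ 2) - bose (4 * Λ ^ 2) :=
    sub_pos.2 (strictAntiOn_bose (mem_Ioi.2 (by positivity)) (mem_Ioi.2 (by positivity))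
      (by nlinarith))
  refine ⟨2 * Real.pi * ((bose (3 * Λ ^ 2) - bose (4 * Λ ^ 2)) *
    (ρ ^ 3 * volume.real (ball (0 : P3) 1))), by
      have := volume_real_ball_zero_one_pos (ι := Fin 3); positivity, fun p hp hpM => ?_⟩
  rw [nuFreq_eq]
  have hA := setIntegral_integrandA_nonneg (g := g) (n0 := n0) (Λ := Λ) (p := p)
  have hB := le_setIntegral_integrandB_of_norm_le hΛ hgn.le hp hpM hρ.le hρΛ hρM
  nlinarith [Real.pi_pos]

lemma volume_mul_norm_pow_three_le_nuFreq (hΛ : 0 < Λ) (hgn : 0 ≤ g * n0) {p : P3}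
    (hp : 0 < ‖p‖) (hΛp : 256 * Λ ^ 2 ≤ ‖p‖ ^ 2) (hgnp : 256 * (g * n0) ≤ ‖p‖ ^ 2) :
    Real.pi * volume.real (ball (0 : P3) 1) / 4096 * ‖p‖ ^ 3 ≤ nuFreq g n0 Λ p := by
  rw [nuFreq_eq]
  have hA := le_setIntegral_integrandA_of_large hΛ hgn hp hΛp hgnp
  have hB := setIntegral_integrandB_nonneg hgn (Λ := Λ) (p := p)
  nlinarith [Real.pi_pos]

lemma exists_mul_one_add_norm_pow_three_le_nuFreq (hΛ : 0 < Λ) (hgn : 0 < g * n0) :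
    ∃ ν0 : ℝ, 0 < ν0 ∧ ∀ p : P3, 2 * Λ ^ 2 < ‖p‖ ^ 2 →
      ν0 * (1 + ‖p‖) ^ 3 ≤ nuFreq g n0 Λ p := by
  set M := 16 * (Λ + √(g * n0)) + 1
  have hM : 0 < M := by positivity
  obtain ⟨c, hc, hsmall⟩ := exists_pos_le_nuFreq_of_norm_le hΛ hgn hM
  have hb := volume_real_ball_zero_one_pos (ι := Fin 3)
  refine ⟨min (c / (1 + M) ^ 3) (Real.pi * volume.real (ball (0 : P3) 1) / 32768),
    lt_min (by positivity) (by positivity), fun p hp => ?_⟩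
  rcases le_or_gt ‖p‖ M with hpM | hpM
  · calc min (c / (1 + M) ^ 3) _ * (1 + ‖p‖) ^ 3 ≤ c / (1 + M) ^ 3 * (1 + M) ^ 3 := by
          gcongr
          · exact min_le_left _ _
      _ = c := div_mul_cancel₀ c (by positivity)
      _ ≤ nuFreq g n0 Λ p := hsmall p hp hpM
  · have hsq := Real.sq_sqrt hgn.le
    have hsqrt := Real.sqrt_nonneg (g * n0)
    have hlarge := volume_mul_norm_pow_three_le_nuFreq hΛ hgn.le (p := p) (by linarith)
      (by nlinarith) (by nlinarith)
    calc min _ (Real.pi * volume.real (ball (0 : P3) 1) / 32768) * (1 + ‖p‖) ^ 3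
        ≤ Real.pi * volume.real (ball (0 : P3) 1) / 32768 * (2 * ‖p‖) ^ 3 := by
          gcongr
          · exact min_le_right _ _
          · linarith
      _ = Real.pi * volume.real (ball (0 : P3) 1) / 4096 * ‖p‖ ^ 3 := by ring
      _ ≤ nuFreq g n0 Λ p := hlarge

end Bounds

/-- two-sided cubic growth bound for the collision frequency. -/
theorem collision_frequency_bounds
    (g n0 Λ : ℝ) (hg : 0 < g) (hn0 : 0 < n0)
    (hΛ : 2 * Real.sqrt (g * n0) < Λ) :
    ∃ ν0 ν1 : ℝ, 0 < ν0 ∧ 0 < ν1 ∧ ∀ p : P3, 2 * Λ ^ 2 < ‖p‖ ^ 2 →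
      ν0 * (1 + ‖p‖) ^ 3 ≤ nuFreq g n0 Λ p ∧ nuFreq g n0 Λ p ≤ ν1 * (1 + ‖p‖) ^ 3 := by
  have hgn : 0 < g * n0 := mul_pos hg hn0
  have hΛ0 : 0 < Λ := (mul_nonneg zero_le_two (Real.sqrt_nonneg _)).trans_lt hΛ
  obtain ⟨ν0, hν0, hlower⟩ := exists_mul_one_add_norm_pow_three_le_nuFreq hΛ0 hgn
  obtain ⟨ν1, hν1, hupper⟩ := exists_nuFreq_le_mul_one_add_norm_pow_three hΛ0 hgn.le
  exact ⟨ν0, ν1, hν0, hν1, fun p hp => ⟨hlower p hp, hupper p⟩⟩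
end
end
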